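/- Let (ρ_ξ)_{ξ∈Ξ} be a smooth model of strictly positive d×d density matrices with SLDs L_{i,ξ} and invertible SLD Fisher matrix G(ξ) with inverse [g^{ij}(ξ)]. Suppose there exist Hermitian matrices F¹,…,Fⁿ such that Σⱼ g^{ij}(ξ)L_{j,ξ} = Fⁱ − ξⁱ·I for all ξ ∈ Ξ and all i. Then for every nonzero u ∈ ℝⁿ and every ε ∈ (0,1) there exists a finite-outcome estimator Π_ε which is locally unbiased at every ξ ∈ Ξ and satisfies, for every ξ ∈ Ξ, uᵀV_ξ(Π_ε)u = (1/(1−ε))·uᵀG(ξ)⁻¹u + (ε/(1−ε))·(Σᵢ uᵢξⁱ)². In particular the family (Π_ε)_{ε∈(0,1)} is a uuᵀ-efficient filtration: lim_{ε↓0} uᵀV_ξ(Π_ε)u = uᵀG(ξ)⁻¹u for every ξ ∈ Ξ. -/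

import Mathlib

open Matrix
open scoped ComplexOrder

noncomputable section

/-! The estimator is a randomized spectral measurement. With probability `1 - ε` one measures
`Y = Σᵢ uᵢ Fⁱ` and reports `λ / ((1 - ε)|u|²) • u` on the eigenvalue `λ`; with probability
`ε / n` each, one measures `Fᵐ` and reports `(n λ / ε) • (eₘ - (uₘ / |u|²) • u)`, a vector
orthogonal to `u`. Its first-moment operators `Σ_ω fⁱ(ω) π_ω` are exactly the `Fⁱ`, which are
locally unbiased at every `ξ` because `Fⁱ - ξⁱ = Σⱼ gⁱʲ L_j` and `Tr ρ L_j = 0`. Its second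
moment in the direction `u` is `(1 - ε)⁻¹ Y²`, and `Tr ρ_ξ Y² = uᵀG⁻¹u + (u·ξ)²` because
`Y - u·ξ = Σⱼ (G⁻¹u)ⱼ L_j`. -/

/-- The symmetrized (Jordan) product `A∘B := (AB+BA)/2`. -/
def jprod {d : ℕ} (A B : Matrix (Fin d) (Fin d) ℂ) : Matrix (Fin d) (Fin d) ℂ :=
  (1/2 : ℂ) • (A * B + B * A)

/-- A POVM on a finite set `Ω`: positive semidefinite matrices summing to `I`. -/
def IsPOVM {d : ℕ} {Ω : Type} [Fintype Ω] (π : Ω → Matrix (Fin d) (Fin d) ℂ) : Prop :=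
  (∀ ω, (π ω).PosSemidef) ∧ ∑ ω, π ω = 1

/-- Local unbiasedness of the estimator `(π, f)` at `ρ` w.r.t. SLDs `L` and values `c`. -/
def LocUnbiased {d n : ℕ} (ρ : Matrix (Fin d) (Fin d) ℂ)
    (L : Fin n → Matrix (Fin d) (Fin d) ℂ) (c : Fin n → ℝ)
    {Ω : Type} [Fintype Ω] (π : Ω → Matrix (Fin d) (Fin d) ℂ)
    (f : Ω → Fin n → ℝ) : Prop :=
  ∀ i, Matrix.trace (ρ * ∑ ω, f ω i • π ω) = (c i : ℂ) ∧
    ∀ j, (Matrix.trace (ρ * L j * ∑ ω, f ω i • π ω)).re =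
      if i = j then (1 : ℝ) else 0

open Unitary in
theorem Matrix.IsHermitian.exists_spectral_povm {d : ℕ} {A : Matrix (Fin d) (Fin d) ℂ}
    (hA : A.IsHermitian) :
    ∃ (P : Fin d → Matrix (Fin d) (Fin d) ℂ) (e : Fin d → ℝ),
      IsPOVM P ∧ ∑ a, e a • P a = A ∧ ∑ a, e a ^ 2 • P a = A * A := by
  let φ := conjStarAlgAut ℂ (Matrix (Fin d) (Fin d) ℂ) hA.eigenvectorUnitary
  let P : Fin d → Matrix (Fin d) (Fin d) ℂ := fun a => φ (diagonal (Pi.single a 1))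
  have hsum (c : Fin d → ℝ) : ∑ a, c a • P a = φ (diagonal (RCLike.ofReal ∘ c)) := by
    have : diagonal (RCLike.ofReal ∘ c) = ∑ a, (c a : ℂ) • diagonal (Pi.single a (1 : ℂ)) := by
      ext i j; by_cases h : i = j <;> simp [h, Matrix.sum_apply, Pi.single_apply]
    rw [this, map_sum]
    refine Finset.sum_congr rfl fun a _ => ?_
    rw [map_smul, RCLike.real_smul_eq_coe_smul (K := ℂ)]; rfl
  let D : Matrix (Fin d) (Fin d) ℂ := diagonal (RCLike.ofReal ∘ hA.eigenvalues)
  have hspec : φ D = A := hA.spectral_theorem.symm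
  refine ⟨P, hA.eigenvalues, ⟨fun a => ?_, ?_⟩, ?_, ?_⟩
  · exact (posSemidef_diagonal_iff.mpr fun i => by
      by_cases h : i = a <;> simp [h]).mul_mul_conjTranspose_same _
  · simpa using hsum 1
  · rw [hsum, hspec]
  · calc ∑ a, hA.eigenvalues a ^ 2 • P a
        _ = φ (D * D) := by
          rw [hsum, diagonal_mul_diagonal]
          congr; ext a; simp [sq]
        _ = A * A := by rw [map_mul, hspec]

theorem exists_mixture_spectral_estimator {d n : ℕ} {ι : Type} [Fintype ι]
    {w : ι → ℝ} (hw : ∀ k, 0 < w k) (hw1 : ∑ k, w k = 1)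
    {O : ι → Matrix (Fin d) (Fin d) ℂ} (hO : ∀ k, (O k).IsHermitian) (v : ι → Fin n → ℝ) :
    ∃ (π : ι × Fin d → Matrix (Fin d) (Fin d) ℂ) (f : ι × Fin d → Fin n → ℝ),
      IsPOVM π ∧ (∀ i, ∑ ω, f ω i • π ω = ∑ k, v k i • O k) ∧
      ∀ u : Fin n → ℝ, ∑ ω, (u ⬝ᵥ f ω) ^ 2 • π ω = ∑ k, ((u ⬝ᵥ v k) ^ 2 / w k) • (O k * O k) := by
  choose P e hP hPe hPe2 using fun k => (hO k).exists_spectral_povm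
  refine ⟨fun ω => w ω.1 • P ω.1 ω.2, fun ω => (e ω.1 ω.2 / w ω.1) • v ω.1, ⟨?_, ?_⟩, ?_, ?_⟩
  · exact fun ω => ((hP ω.1).1 ω.2).smul (hw ω.1).le
  · simp only [Fintype.sum_prod_type, ← Finset.smul_sum, (hP _).2, ← Finset.sum_smul, hw1,
      one_smul]
  · intro i
    simp only [Fintype.sum_prod_type, ← hPe, Finset.smul_sum]
    refine Finset.sum_congr rfl fun k _ => Finset.sum_congr rfl fun a _ => ?_
    rw [smul_smul, smul_smul, Pi.smul_apply, smul_eq_mul]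
    congr 1
    field_simp [(hw k).ne']
  · intro u
    simp only [Fintype.sum_prod_type, ← hPe2, Finset.smul_sum]
    refine Finset.sum_congr rfl fun k _ => Finset.sum_congr rfl fun a _ => ?_
    rw [smul_smul, smul_smul, dotProduct_smul, smul_eq_mul]
    congr 1
    field_simp [(hw k).ne']

theorem exists_isPOVM_moments_eq {d n : ℕ} {F : Fin n → Matrix (Fin d) (Fin d) ℂ}
    (hF : ∀ i, (F i).IsHermitian) {u : Fin n → ℝ} (hu : u ≠ 0) {ε : ℝ} (hε0 : 0 < ε)
    (hε1 : ε < 1) :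
    ∃ (Ω : Type) (_ : Fintype Ω) (π : Ω → Matrix (Fin d) (Fin d) ℂ) (f : Ω → Fin n → ℝ),
      IsPOVM π ∧ (∀ i, ∑ ω, f ω i • π ω = F i) ∧
      ∑ ω, (u ⬝ᵥ f ω) ^ 2 • π ω = (1 - ε)⁻¹ • ((∑ i, u i • F i) * ∑ i, u i • F i) := by
  set Y := ∑ i, u i • F i
  set W := u ⬝ᵥ u
  have hW : W ≠ 0 := dotProduct_self_eq_zero.not.mpr hu
  have hn : (0 : ℝ) < n := by
    obtain ⟨i, -⟩ := Function.ne_iff.mp hu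
    exact_mod_cast i.pos
  let w : Option (Fin n) → ℝ := fun k => k.elim (1 - ε) fun _ => ε / n
  let O : Option (Fin n) → Matrix (Fin d) (Fin d) ℂ := fun k => k.elim Y F
  let v : Option (Fin n) → Fin n → ℝ :=
    fun k => k.elim (W⁻¹ • u) fun m => Pi.single m 1 - (u m / W) • u
  have hw : ∀ k, 0 < w k := by
    rintro (_ | _)
    exacts [sub_pos.mpr hε1, div_pos hε0 hn]
  have hw1 : ∑ k, w k = 1 := by
    simp only [w, Fintype.sum_option, Option.elim_none, Option.elim_some, Finset.sum_const,
      Finset.card_univ, Fintype.card_fin, nsmul_eq_mul]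
    field_simp
    ring
  have hO : ∀ k, (O k).IsHermitian := by
    rintro (_ | m)
    exacts [isSelfAdjoint_sum _ fun i _ => (IsSelfAdjoint.all (u i)).smul (hF i), hF m]
  obtain ⟨π, f, hπ, h1, h2⟩ := exists_mixture_spectral_estimator hw hw1 hO v
  refine ⟨_, inferInstance, π, f, hπ, fun i => ?_, ?_⟩
  · rw [h1, Fintype.sum_option]
    simp only [O, v, Option.elim, Pi.smul_apply, Pi.sub_apply, smul_eq_mul, sub_smul,
      Finset.sum_sub_distrib]
    have hsingle : ∑ m, (Pi.single m 1 : Fin n → ℝ) i • F m = F i := by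
      simp [Pi.single_apply]
    have hY : ∑ m, (u m / W * u i) • F m = (W⁻¹ * u i) • Y := by
      simp only [Y, Finset.smul_sum, smul_smul]
      exact Finset.sum_congr rfl fun m _ => by ring_nf
    rw [hsingle, hY, add_sub_cancel]
  · have hv₀ : u ⬝ᵥ v none = 1 := by
      simp only [v, Option.elim, dotProduct_smul, smul_eq_mul]
      exact inv_mul_cancel₀ hW
    have hv : ∀ m, u ⬝ᵥ v (some m) = 0 := by
      intro m
      simp only [v, Option.elim, dotProduct_sub, dotProduct_smul, dotProduct_single, smul_eq_mul,
        mul_one]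
      rw [div_mul_cancel₀ _ hW, sub_self]
    rw [h2 u, Fintype.sum_option]
    simp [hv₀, hv, w, O]

theorem trace_jprod {d : ℕ} (A B : Matrix (Fin d) (Fin d) ℂ) :
    (jprod A B).trace = (A * B).trace := by
  rw [jprod, trace_smul, trace_add, trace_mul_comm B A, smul_eq_mul]
  ring

theorem re_trace_mul_mul_comm_of_isHermitian {d : ℕ} {A B C : Matrix (Fin d) (Fin d) ℂ}
    (hA : A.IsHermitian) (hB : B.IsHermitian) (hC : C.IsHermitian) :
    (A * B * C).trace.re = (A * C * B).trace.re := by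
  have : (A * B * C).trace = star (A * C * B).trace := by
    rw [← trace_conjTranspose, conjTranspose_mul, conjTranspose_mul, hA, hB, hC,
      Matrix.mul_assoc, trace_mul_comm, Matrix.mul_assoc]
  rw [this]
  exact Complex.conj_re _

theorem re_trace_mul_sum_smul {d : ℕ} {Ω : Type} [Fintype Ω] (ρ : Matrix (Fin d) (Fin d) ℂ)
    (π : Ω → Matrix (Fin d) (Fin d) ℂ) (g : Ω → ℝ) :
    (ρ * ∑ ω, g ω • π ω).trace.re = ∑ ω, g ω * (ρ * π ω).trace.re := by
  simp [Matrix.mul_sum, trace_sum, Complex.re_sum]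

theorem sum_mul_variance_mul_eq {d n : ℕ} {Ω : Type} [Fintype Ω]
    {π : Ω → Matrix (Fin d) (Fin d) ℂ} (hπ : ∑ ω, π ω = 1) {ρ : Matrix (Fin d) (Fin d) ℂ}
    (hρ : ρ.trace = 1) (f : Ω → Fin n → ℝ) (ξ u : Fin n → ℝ) :
    ∑ i, ∑ j, u i * (∑ ω, (f ω i - ξ i) * (f ω j - ξ j) * (ρ * π ω).trace.re) * u j =
      (ρ * ∑ ω, (u ⬝ᵥ f ω) ^ 2 • π ω).trace.re
        - 2 * (u ⬝ᵥ ξ) * (ρ * ∑ i, u i • ∑ ω, f ω i • π ω).trace.re + (u ⬝ᵥ ξ) ^ 2 := by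
  have hsq : ∑ i, ∑ j, u i * (∑ ω, (f ω i - ξ i) * (f ω j - ξ j) * (ρ * π ω).trace.re) * u j
      = ∑ ω, (u ⬝ᵥ f ω - u ⬝ᵥ ξ) ^ 2 * (ρ * π ω).trace.re := by
    have hexpand : ∀ ω, (u ⬝ᵥ f ω - u ⬝ᵥ ξ) ^ 2 * (ρ * π ω).trace.re = ∑ i, ∑ j,
        u i * ((f ω i - ξ i) * (f ω j - ξ j) * (ρ * π ω).trace.re) * u j := by
      intro ω
      rw [← dotProduct_sub, sq, dotProduct, Finset.sum_mul_sum, Finset.sum_mul]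
      exact Finset.sum_congr rfl fun i _ => by
        rw [Finset.sum_mul]
        exact Finset.sum_congr rfl fun j _ => by simp only [Pi.sub_apply]; ring
    simp only [hexpand, Finset.mul_sum, Finset.sum_mul]
    rw [eq_comm, Finset.sum_comm]
    exact Finset.sum_congr rfl fun i _ => Finset.sum_comm
  have hmean : ∑ i, u i • ∑ ω, f ω i • π ω = ∑ ω, (u ⬝ᵥ f ω) • π ω := by
    simp only [Finset.smul_sum, smul_smul, dotProduct, Finset.sum_smul]
    exact Finset.sum_comm
  have htotal : ∑ ω, (ρ * π ω).trace.re = 1 := by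
    simpa [hπ, hρ] using (re_trace_mul_sum_smul ρ π 1).symm
  rw [hsq, hmean, re_trace_mul_sum_smul, re_trace_mul_sum_smul, Finset.mul_sum,
    ← mul_one ((u ⬝ᵥ ξ) ^ 2), ← htotal, Finset.mul_sum, ← Finset.sum_sub_distrib,
    ← Finset.sum_add_distrib]
  exact Finset.sum_congr rfl fun ω _ => by ring

theorem sum_smul_sum_smul_eq_vecMul {d n : ℕ} (u : Fin n → ℝ) (M : Matrix (Fin n) (Fin n) ℝ)
    (L : Fin n → Matrix (Fin d) (Fin d) ℂ) :
    ∑ i, u i • ∑ j, M i j • L j = ∑ j, (u ᵥ* M) j • L j := by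
  simp only [Finset.smul_sum, smul_smul, vecMul, dotProduct, Finset.sum_smul]
  exact Finset.sum_comm

theorem trace_eq_zero_of_hasDerivAt_update {d n : ℕ} {Ξ : Set (Fin n → ℝ)} (hΞ : IsOpen Ξ)
    {ρ : (Fin n → ℝ) → Matrix (Fin d) (Fin d) ℂ} (hρ : ∀ ζ ∈ Ξ, (ρ ζ).trace = 1)
    {ξ : Fin n → ℝ} (hξ : ξ ∈ Ξ) {i : Fin n} {D : Matrix (Fin d) (Fin d) ℂ}
    (hD : ∀ a b, HasDerivAt (fun t => ρ (Function.update ξ i t) a b) (D a b) (ξ i)) :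
    D.trace = 0 := by
  have hderiv : HasDerivAt (fun t => (ρ (Function.update ξ i t)).trace) D.trace (ξ i) :=
    HasDerivAt.fun_sum fun a _ => hD a a
  have hconst : (fun t => (ρ (Function.update ξ i t)).trace) =ᶠ[nhds (ξ i)] fun _ => 1 := by
    have hcont : Continuous (Function.update ξ i) := continuous_const.update i continuous_id
    filter_upwards [(hΞ.preimage hcont).mem_nhds (by simpa using hξ)] with t ht
    exact hρ _ ht
  exact hderiv.unique ((hasDerivAt_const _ _).congr_of_eventuallyEq hconst)

section FisherGeometry

variable {d n : ℕ} {ρ : Matrix (Fin d) (Fin d) ℂ} {L : Fin n → Matrix (Fin d) (Fin d) ℂ}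
  {G : Matrix (Fin n) (Fin n) ℝ}

theorem re_trace_mul_sum_smul_mul (hG : ∀ i j, G i j = (ρ * L i * L j).trace.re)
    (c : Fin n → ℝ) (j : Fin n) :
    (ρ * (∑ k, c k • L k) * L j).trace.re = (c ᵥ* G) j := by
  simp [Matrix.mul_sum, Matrix.sum_mul, trace_sum, Complex.re_sum, hG, vecMul, dotProduct]

theorem trace_mul_eq_of_sum_smul_eq_sub (hρ : ρ.trace = 1) (hL : ∀ j, (ρ * L j).trace = 0)
    {c : Fin n → ℝ} {X : Matrix (Fin d) (Fin d) ℂ} {x : ℝ}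
    (hX : ∑ j, c j • L j = X - x • 1) : (ρ * X).trace = x := by
  rw [← sub_add_cancel X (x • 1), ← hX]
  simp [Matrix.mul_add, Matrix.mul_sum, trace_sum, hL, hρ, Complex.real_smul]

theorem re_trace_mul_mul_eq_vecMul (hρ : ρ.IsHermitian) (hLh : ∀ j, (L j).IsHermitian)
    (hL : ∀ j, (ρ * L j).trace = 0) (hG : ∀ i j, G i j = (ρ * L i * L j).trace.re)
    {c : Fin n → ℝ} {X : Matrix (Fin d) (Fin d) ℂ} {x : ℝ} (hXh : X.IsHermitian)
    (hX : ∑ j, c j • L j = X - x • 1) (j : Fin n) :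
    (ρ * L j * X).trace.re = (c ᵥ* G) j := by
  rw [re_trace_mul_mul_comm_of_isHermitian hρ (hLh j) hXh, ← sub_add_cancel X (x • 1), ← hX,
    Matrix.mul_add, Matrix.add_mul, trace_add, Complex.add_re, re_trace_mul_sum_smul_mul hG]
  simp [hL]

theorem re_trace_mul_mul_self_eq (hρ : ρ.trace = 1) (hL : ∀ j, (ρ * L j).trace = 0)
    (hG : ∀ i j, G i j = (ρ * L i * L j).trace.re) {c : Fin n → ℝ}
    {Y : Matrix (Fin d) (Fin d) ℂ} {s : ℝ} (hY : ∑ j, c j • L j = Y - s • 1) :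
    (ρ * (Y * Y)).trace.re = c ᵥ* G ⬝ᵥ c + s ^ 2 := by
  set Lc := ∑ j, c j • L j
  have hLc : (ρ * Lc).trace = 0 := by simp [Lc, Matrix.mul_sum, trace_sum, hL]
  have hLcL : ∀ j, (ρ * Lc * L j).trace.re = (c ᵥ* G) j := re_trace_mul_sum_smul_mul hG c
  have hLcLc : (ρ * (Lc * Lc)).trace.re = c ᵥ* G ⬝ᵥ c := by
    nth_rw 2 [show Lc = ∑ j, c j • L j from rfl]
    simp [← Matrix.mul_assoc, Matrix.mul_sum, trace_sum, Complex.re_sum, hLcL, dotProduct,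
      mul_comm]
  rw [← sub_add_cancel Y (s • 1), ← hY]
  simp [Matrix.add_mul, Matrix.mul_add, trace_add, hLc, hLcLc, hρ, sq]

theorem sum_vecMul_smul_eq_sub {M : Matrix (Fin n) (Fin n) ℝ} {F : Fin n → Matrix (Fin d) (Fin d) ℂ}
    {ξ : Fin n → ℝ} (hF : ∀ i, ∑ j, M i j • L j = F i - ξ i • 1) (u : Fin n → ℝ) :
    ∑ j, (u ᵥ* M) j • L j = ∑ i, u i • F i - (u ⬝ᵥ ξ) • 1 := by
  simp only [← sum_smul_sum_smul_eq_vecMul, hF, smul_sub, Finset.sum_sub_distrib, smul_smul,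
    ← Finset.sum_smul, dotProduct]

theorem re_trace_mul_sq_eq_inv_quadForm (hρ : ρ.trace = 1) (hL : ∀ j, (ρ * L j).trace = 0)
    (hG : ∀ i j, G i j = (ρ * L i * L j).trace.re) (hGinv : IsUnit G.det)
    {F : Fin n → Matrix (Fin d) (Fin d) ℂ} {ξ : Fin n → ℝ}
    (hF : ∀ i, ∑ j, G⁻¹ i j • L j = F i - ξ i • 1) (u : Fin n → ℝ) :
    (ρ * ((∑ i, u i • F i) * ∑ i, u i • F i)).trace.re = u ⬝ᵥ G⁻¹ *ᵥ u + (u ⬝ᵥ ξ) ^ 2 := by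
  rw [re_trace_mul_mul_self_eq hρ hL hG (sum_vecMul_smul_eq_sub hF u), vecMul_vecMul,
    nonsing_inv_mul _ hGinv, vecMul_one, dotProduct_mulVec, dotProduct_comm]

end FisherGeometry

theorem efficient_filtration_exists_general (d n : ℕ)
    (Ξ : Set (Fin n → ℝ)) (hΞopen : IsOpen Ξ)
    (ρ : (Fin n → ℝ) → Matrix (Fin d) (Fin d) ℂ)
    (hρ : ∀ ξ ∈ Ξ, (ρ ξ).PosDef ∧ (ρ ξ).trace = 1)
    (L : (Fin n → ℝ) → Fin n → Matrix (Fin d) (Fin d) ℂ)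
    (hLherm : ∀ ξ ∈ Ξ, ∀ i, (L ξ i).IsHermitian)
    (hLsld : ∀ ξ ∈ Ξ, ∀ i, ∀ a b : Fin d,
      HasDerivAt (fun t => ρ (Function.update ξ i t) a b)
        ((jprod (ρ ξ) (L ξ i)) a b) (ξ i))
    (G : (Fin n → ℝ) → Matrix (Fin n) (Fin n) ℝ)
    (hG : ∀ ξ ∈ Ξ, ∀ i j, G ξ i j = (Matrix.trace (ρ ξ * L ξ i * L ξ j)).re)
    (hGinv : ∀ ξ ∈ Ξ, IsUnit (G ξ).det)
    (F : Fin n → Matrix (Fin d) (Fin d) ℂ) (hFherm : ∀ i, (F i).IsHermitian)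
    (hF : ∀ ξ ∈ Ξ, ∀ i, (∑ j, (G ξ)⁻¹ i j • L ξ j) =
      F i - ξ i • (1 : Matrix (Fin d) (Fin d) ℂ)) :
    ∀ u : Fin n → ℝ, u ≠ 0 → ∀ ε : ℝ, 0 < ε → ε < 1 →
      ∃ (Ω : Type) (_ : Fintype Ω)
        (π : Ω → Matrix (Fin d) (Fin d) ℂ) (f : Ω → Fin n → ℝ),
        IsPOVM π ∧
        (∀ ξ ∈ Ξ, LocUnbiased (ρ ξ) (L ξ) ξ π f) ∧
        (∀ ξ ∈ Ξ,
          (∑ i, ∑ j, u i *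
            (∑ ω, (f ω i - ξ i) * (f ω j - ξ j) * (Matrix.trace (ρ ξ * π ω)).re) * u j) =
          (1/(1-ε)) * (u ⬝ᵥ (G ξ)⁻¹.mulVec u) + (ε/(1-ε)) * (∑ i, u i * ξ i)^2) := by
  intro u hu ε hε0 hε1
  have hL0 : ∀ ξ ∈ Ξ, ∀ j, (ρ ξ * L ξ j).trace = 0 := fun ξ hξ j => by
    rw [← trace_jprod]
    exact trace_eq_zero_of_hasDerivAt_update hΞopen (fun ζ hζ => (hρ ζ hζ).2) hξ (hLsld ξ hξ j)
  obtain ⟨Ω, _, π, f, hπ, hmean, hsecond⟩ := exists_isPOVM_moments_eq hFherm hu hε0 hε1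
  refine ⟨Ω, inferInstance, π, f, hπ, fun ξ hξ i => ?_, fun ξ hξ => ?_⟩
  · rw [hmean i]
    refine ⟨trace_mul_eq_of_sum_smul_eq_sub (hρ ξ hξ).2 (hL0 ξ hξ) (hF ξ hξ i), fun j => ?_⟩
    rw [re_trace_mul_mul_eq_vecMul (hρ ξ hξ).1.isHermitian (hLherm ξ hξ) (hL0 ξ hξ) (hG ξ hξ)
      (hFherm i) (hF ξ hξ i)]
    exact congrFun (congrFun (nonsing_inv_mul _ (hGinv ξ hξ)) i) j
  · rw [sum_mul_variance_mul_eq hπ.2 (hρ ξ hξ).2, hsecond]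
    simp only [hmean]
    rw [Matrix.mul_smul, trace_smul, Complex.smul_re, smul_eq_mul,
      re_trace_mul_sq_eq_inv_quadForm (hρ ξ hξ).2 (hL0 ξ hξ) (hG ξ hξ) (hGinv ξ hξ) (hF ξ hξ),
      trace_mul_eq_of_sum_smul_eq_sub (hρ ξ hξ).2 (hL0 ξ hξ) (sum_vecMul_smul_eq_sub (hF ξ hξ) u),
      Complex.ofReal_re, ← dotProduct]
    field_simp [(sub_pos.mpr hε1).ne']
    ring

/-- If the model satisfies the operator condition
`Σⱼ gⁱʲ(ξ)L_{j,ξ} = Fⁱ − ξⁱI` (e-autoparallel with `ξ` m-affine), then for every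
nonzero `u` and `ε ∈ (0,1)` there is an everywhere locally unbiased estimator `Π_ε` with
`uᵀV_ξ(Π_ε)u = (1/(1−ε))uᵀG(ξ)⁻¹u + (ε/(1−ε))(Σᵢuᵢξⁱ)²`; these form a
`uuᵀ`-efficient filtration. -/
theorem efficient_filtration_exists (d n : ℕ)
    (Ξ : Set (Fin n → ℝ)) (hΞopen : IsOpen Ξ)
    (ρ : (Fin n → ℝ) → Matrix (Fin d) (Fin d) ℂ)
    (hρ : ∀ ξ ∈ Ξ, (ρ ξ).PosDef ∧ (ρ ξ).trace = 1)
    (hinj : Set.InjOn ρ Ξ)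
    (L : (Fin n → ℝ) → Fin n → Matrix (Fin d) (Fin d) ℂ)
    (hLherm : ∀ ξ ∈ Ξ, ∀ i, (L ξ i).IsHermitian)
    (hLsld : ∀ ξ ∈ Ξ, ∀ i, ∀ a b : Fin d,
      HasDerivAt (fun t => ρ (Function.update ξ i t) a b)
        ((jprod (ρ ξ) (L ξ i)) a b) (ξ i))
    (G : (Fin n → ℝ) → Matrix (Fin n) (Fin n) ℝ)
    (hG : ∀ ξ ∈ Ξ, ∀ i j, G ξ i j = (Matrix.trace (ρ ξ * L ξ i * L ξ j)).re)
    (hGinv : ∀ ξ ∈ Ξ, IsUnit (G ξ).det)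
    (F : Fin n → Matrix (Fin d) (Fin d) ℂ) (hFherm : ∀ i, (F i).IsHermitian)
    (hF : ∀ ξ ∈ Ξ, ∀ i, (∑ j, (G ξ)⁻¹ i j • L ξ j) =
      F i - ξ i • (1 : Matrix (Fin d) (Fin d) ℂ)) :
    ∀ u : Fin n → ℝ, u ≠ 0 → ∀ ε : ℝ, 0 < ε → ε < 1 →
      ∃ (Ω : Type) (_ : Fintype Ω)
        (π : Ω → Matrix (Fin d) (Fin d) ℂ) (f : Ω → Fin n → ℝ),
        IsPOVM π ∧
        (∀ ξ ∈ Ξ, LocUnbiased (ρ ξ) (L ξ) ξ π f) ∧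
        (∀ ξ ∈ Ξ,
          (∑ i, ∑ j, u i *
            (∑ ω, (f ω i - ξ i) * (f ω j - ξ j) * (Matrix.trace (ρ ξ * π ω)).re) * u j) =
          (1/(1-ε)) * (u ⬝ᵥ (G ξ)⁻¹.mulVec u) + (ε/(1-ε)) * (∑ i, u i * ξ i)^2) :=
  efficient_filtration_exists_general d n Ξ hΞopen ρ hρ L hLherm hLsld G hG hGinv F hFherm hF
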